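/- arXiv:1403.7480 — 3 statements merged into one kernel-verified Lean document; each statement's English description precedes it below -/
import Mathlib

section
/- Every root of unity α belongs to 𝓕_2; that is, if α is a root of unity then there exists a set S ⊆ ℤ with Card(S) = 2 and ℤ[α] = S[α], and no finite set S ⊆ ℂ with Card(S) ≤ 1 satisfies ℤ[α] = S[α]. (Explicitly, ℤ[1] = {−1, 1}[1], and for any root of unity α ≠ 1 one has ℤ[α] = {0, 1}[α].) -/
open Polynomial

/-- `ℤ[α]`: the set of values `P(α)` for `P ∈ ℤ[x]`. -/
def Zadj (α : ℂ) : Set ℂ := {z | ∃ P : ℤ[X], aeval α P = z}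

/-- `F[α]`: the set of all sums `Σ_{j=0}^{n} f_j α^j` with `n ∈ ℕ` and `f_0, …, f_n ∈ F`. -/
def repSet (α : ℂ) (F : Set ℂ) : Set ℂ :=
  {z | ∃ (n : ℕ) (f : ℕ → ℂ), (∀ j ≤ n, f j ∈ F) ∧
    z = ∑ j ∈ Finset.range (n + 1), f j * α ^ j}

/-!
If `α ^ m = 1` with `0 < m`, a digit string can be padded with zeros to a length divisible
by `m`, after which concatenating two strings adds their values. So when `0, 1 ∈ F` the set
`F[α]` is an additive monoid containing every power `α ^ i`, and for `α ≠ 1` it also contains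
`-α ^ i = α ^ (i + 1) + ⋯ + α ^ (i + m - 1)`; hence it contains `ℤ[α]`. For `α = 1`
concatenation always adds values, so `{-1, 1}[1] = ℤ`. Conversely `{s}[α]` consists of the
numbers `s (1 + α + ⋯ + α ^ n)`: a finite set when `α ≠ 1`, and one not containing both `0`
and `1` when `α = 1`, whereas `ℤ[α]` is infinite and contains `0` and `1`.
-/

open Finset

section

variable {α : ℂ} {F : Set ℂ}

theorem Zadj_eq_range (α : ℂ) : Zadj α = ((aeval α : ℤ[X] →ₐ[ℤ] ℂ).range : Set ℂ) := by
  ext; simp [Zadj]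

theorem natCast_mem_Zadj (α : ℂ) (k : ℕ) : (k : ℂ) ∈ Zadj α := ⟨k, by simp⟩

theorem Zadj_infinite (α : ℂ) : (Zadj α).Infinite :=
  Set.infinite_of_injective_forall_mem Nat.cast_injective (natCast_mem_Zadj α)

theorem repSet_mono {G : Set ℂ} (h : F ⊆ G) : repSet α F ⊆ repSet α G :=
  fun _ ⟨n, f, hf, hz⟩ => ⟨n, f, fun j hj => h (hf j hj), hz⟩

theorem repSet_subset_Zadj (hF : F ⊆ Set.range ((↑) : ℤ → ℂ)) : repSet α F ⊆ Zadj α := by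
  rintro _ ⟨n, f, hf, rfl⟩
  rw [Zadj_eq_range]
  refine sum_mem fun j hj => mul_mem ?_ (pow_mem ((AlgHom.mem_range _).mpr ⟨X, aeval_X α⟩) j)
  obtain ⟨k, hk⟩ := hF (hf j (Nat.lt_succ_iff.mp (mem_range.mp hj)))
  exact hk ▸ intCast_mem _ k

theorem mem_repSet_of_mem {c : ℂ} (hc : c ∈ F) : c ∈ repSet α F :=
  ⟨0, fun _ => c, fun _ _ => hc, by simp⟩

theorem pow_mem_repSet (h0 : 0 ∈ F) (h1 : 1 ∈ F) (i : ℕ) : α ^ i ∈ repSet α F := by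
  classical
  refine ⟨i, fun j => if j = i then 1 else 0, fun j _ => ?_, by simp [ite_mul]⟩
  dsimp only
  split_ifs <;> assumption

theorem exists_digits_of_le (h0 : 0 ∈ F) {n N : ℕ} (hnN : n ≤ N) {f : ℕ → ℂ}
    (hf : ∀ j ≤ n, f j ∈ F) :
    ∃ g : ℕ → ℂ, (∀ j ≤ N, g j ∈ F) ∧
      ∑ j ∈ range (n + 1), f j * α ^ j = ∑ j ∈ range (N + 1), g j * α ^ j := by
  classical
  refine ⟨fun j => if j ≤ n then f j else 0, fun j _ => ?_, ?_⟩
  · dsimp only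
    split_ifs with hj
    exacts [hf j hj, h0]
  · rw [← sum_subset (range_subset_range.mpr (Nat.succ_le_succ hnN))]
    · refine sum_congr rfl fun j hj => ?_
      dsimp only
      rw [if_pos (Nat.lt_succ_iff.mp (mem_range.mp hj))]
    · intro j _ hj
      dsimp only
      rw [if_neg (by simpa using hj), zero_mul]

/-- Writing the digits of `w` after a block whose length is a period of `α` adds `w` to the
value of the block. -/
theorem sum_add_mem_repSet {n : ℕ} {f : ℕ → ℂ} (hf : ∀ j ≤ n, f j ∈ F) (hα : α ^ (n + 1) = 1)
    {w : ℂ} (hw : w ∈ repSet α F) :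
    ∑ j ∈ range (n + 1), f j * α ^ j + w ∈ repSet α F := by
  classical
  obtain ⟨n', g, hg, rfl⟩ := hw
  refine ⟨n + 1 + n', fun j => if j ≤ n then f j else g (j - (n + 1)), fun j hj => ?_, ?_⟩
  · dsimp only
    split_ifs with hjn
    exacts [hf j hjn, hg _ (by omega)]
  · rw [show n + 1 + n' + 1 = (n + 1) + (n' + 1) by ring, sum_range_add _ (n + 1)]
    congr 1
    · refine sum_congr rfl fun j hj => ?_
      dsimp only
      rw [if_pos (Nat.lt_succ_iff.mp (mem_range.mp hj))]
    · refine sum_congr rfl fun j _ => ?_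
      dsimp only
      rw [if_neg (by omega), Nat.add_sub_cancel_left, pow_add, hα, one_mul]

theorem add_mem_repSet_one {z w : ℂ} (hz : z ∈ repSet 1 F) (hw : w ∈ repSet 1 F) :
    z + w ∈ repSet 1 F := by
  obtain ⟨n, f, hf, rfl⟩ := hz
  exact sum_add_mem_repSet hf (one_pow _) hw

theorem add_mem_repSet {m : ℕ} (hm : 0 < m) (hαm : α ^ m = 1) (h0 : 0 ∈ F) {z w : ℂ}
    (hz : z ∈ repSet α F) (hw : w ∈ repSet α F) : z + w ∈ repSet α F := by
  obtain ⟨n, f, hf, rfl⟩ := hz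
  obtain ⟨N, hN⟩ : ∃ N, N + 1 = m * (n + 1) :=
    ⟨m * (n + 1) - 1, Nat.sub_add_cancel (Nat.mul_pos hm n.succ_pos)⟩
  obtain ⟨g, hg, hfg⟩ := exists_digits_of_le (α := α) h0
    (Nat.lt_succ_iff.mp (hN ▸ Nat.le_mul_of_pos_left _ hm)) hf
  rw [hfg]
  exact sum_add_mem_repSet hg (by rw [hN, pow_mul, hαm, one_pow]) hw

theorem Zadj_subset_of_add_mem {R : Set ℂ} (h0 : 0 ∈ R) (hadd : ∀ {z w}, z ∈ R → w ∈ R → z + w ∈ R)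
    (hpow : ∀ i, α ^ i ∈ R) (hneg : ∀ i, -α ^ i ∈ R) : Zadj α ⊆ R := by
  let M : AddSubmonoid ℂ := { carrier := R, add_mem' := hadd, zero_mem' := h0 }
  rintro _ ⟨P, rfl⟩
  rw [aeval_eq_sum_range]
  refine sum_mem (S := M) fun i _ => ?_
  obtain ⟨k, hk | hk⟩ := (P.coeff i).eq_nat_or_neg
  · rw [hk, natCast_zsmul]
    exact nsmul_mem (S := M) (hpow i) k
  · rw [hk, neg_zsmul, natCast_zsmul, ← smul_neg]
    exact nsmul_mem (S := M) (hneg i) k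

theorem neg_pow_eq_sum_pow {m : ℕ} (hm : 0 < m) (hαm : α ^ m = 1) (hα1 : α ≠ 1) (i : ℕ) :
    -α ^ i = ∑ r ∈ range (m - 1), α ^ (i + 1 + r) := by
  have hgeom : ∑ r ∈ range m, α ^ (i + r) = 0 := by
    simp_rw [pow_add, ← mul_sum, geom_sum_eq hα1, hαm, sub_self, zero_div, mul_zero]
  obtain ⟨k, rfl⟩ := Nat.exists_eq_add_of_lt hm
  rw [sum_range_succ', add_zero, add_eq_zero_iff_neg_eq'] at hgeom
  simpa [add_assoc, add_comm 1] using hgeom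

theorem Zadj_subset_repSet {m : ℕ} (hm : 0 < m) (hαm : α ^ m = 1) (hα1 : α ≠ 1)
    (h0 : 0 ∈ F) (h1 : 1 ∈ F) : Zadj α ⊆ repSet α F := by
  have hadd {z w : ℂ} := @add_mem_repSet α F m hm hαm h0 z w
  refine Zadj_subset_of_add_mem (mem_repSet_of_mem h0) hadd (pow_mem_repSet h0 h1) fun i => ?_
  rw [neg_pow_eq_sum_pow hm hαm hα1]
  exact sum_induction _ _ (fun _ _ => hadd) (mem_repSet_of_mem h0)
    fun r _ => pow_mem_repSet h0 h1 _

theorem Zadj_one_subset_repSet (h1 : 1 ∈ F) (hneg1 : -1 ∈ F) : Zadj 1 ⊆ repSet 1 F := by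
  refine Zadj_subset_of_add_mem ?_ add_mem_repSet_one (fun i => ?_) (fun i => ?_)
  · simpa using add_mem_repSet_one (mem_repSet_of_mem h1) (mem_repSet_of_mem hneg1)
  · simpa using mem_repSet_of_mem h1
  · simpa using mem_repSet_of_mem hneg1

theorem repSet_singleton_subset (α s : ℂ) :
    repSet α {s} ⊆ (s * ·) '' Set.range fun n : ℕ => ∑ j ∈ range (n + 1), α ^ j := by
  rintro _ ⟨n, f, hf, rfl⟩
  refine ⟨_, ⟨n, rfl⟩, ?_⟩
  dsimp only
  rw [mul_sum]
  exact sum_congr rfl fun j hj => by rw [hf j (Nat.lt_succ_iff.mp (mem_range.mp hj))]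

theorem finite_range_geom_sum {m : ℕ} (hm : 0 < m) (hαm : α ^ m = 1) (hα1 : α ≠ 1) :
    (Set.range fun n : ℕ => ∑ j ∈ range (n + 1), α ^ j).Finite := by
  refine (((nthRoots m (1 : ℂ)).toFinset.finite_toSet).image fun w => (w - 1) / (α - 1)).subset ?_
  rintro _ ⟨n, rfl⟩
  refine ⟨α ^ (n + 1), ?_, (geom_sum_eq hα1 _).symm⟩
  rw [mem_coe, Multiset.mem_toFinset, mem_nthRoots hm, ← pow_mul, mul_comm, pow_mul, hαm,
    one_pow]

theorem Zadj_not_subset_repSet_singleton {m : ℕ} (hm : 0 < m) (hαm : α ^ m = 1) (s : ℂ) :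
    ¬ Zadj α ⊆ repSet α {s} := by
  intro h
  replace h := h.trans (repSet_singleton_subset α s)
  by_cases hα1 : α = 1
  · subst hα1
    obtain ⟨_, ⟨n, rfl⟩, hn⟩ := h (natCast_mem_Zadj 1 0)
    obtain ⟨_, ⟨n', rfl⟩, hn'⟩ := h (natCast_mem_Zadj 1 1)
    simp only [one_pow, sum_const, card_range, nsmul_one, Nat.cast_add_one, Nat.cast_zero,
      mul_eq_zero, Nat.cast_add_one_ne_zero, or_false] at hn hn'
    simp [hn] at hn'
  · exact Zadj_infinite α (((finite_range_geom_sum hm hαm hα1).image _).subset h)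

end

/-- Every root of unity `α` belongs to `𝓕₂`: there is a two-element set `S ⊆ ℤ` with
`ℤ[α] = S[α]`, and no set `S ⊆ ℂ` with at most one element satisfies `ℤ[α] = S[α]`. -/
theorem rootOfUnity_mem_F2 (α : ℂ) (hα : ∃ m : ℕ, 0 < m ∧ α ^ m = 1) :
    (∃ S : Finset ℤ, S.card = 2 ∧ repSet α ((fun m : ℤ => (m : ℂ)) '' ↑S) = Zadj α) ∧
    ∀ S : Finset ℂ, S.card ≤ 1 → repSet α ↑S ≠ Zadj α := by
  obtain ⟨m, hm, hαm⟩ := hα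
  refine ⟨?_, fun S hS heq => ?_⟩
  · have hZ (S : Finset ℤ) := repSet_subset_Zadj (α := α) (Set.image_subset_range _ (S : Set ℤ))
    by_cases hα1 : α = 1
    · subst hα1
      exact ⟨{-1, 1}, rfl, (hZ _).antisymm (Zadj_one_subset_repSet ⟨1, by simp⟩ ⟨-1, by simp⟩)⟩
    · exact ⟨{0, 1}, rfl, (hZ _).antisymm (Zadj_subset_repSet hm hαm hα1 ⟨0, by simp⟩ ⟨1, by simp⟩)⟩
  · obtain ⟨s, hs⟩ := card_le_one_iff_subset_singleton.mp hS
    refine Zadj_not_subset_repSet_singleton hm hαm s (heq ▸ repSet_mono ?_)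
    exact_mod_cast hs
end

section
/- If an algebraic number α belongs to 𝓕_2, then either all conjugates of α (the complex roots of its minimal polynomial, including α itself) have modulus 1, or α is an expanding algebraic integer (an algebraic integer all of whose conjugates have modulus greater than 1) with |M_α(0)| = 2. -/
/-!
Let `ℤ[α] = S[α]` with `#S = 2`. Since the digits lie in `ℤ[α]`, a digit expansion of an integer
can be transported from `α` to any conjugate `z`; for `|z| < 1` this bounds all integers, so every
conjugate has `|z| ≥ 1`. Two of `0, 1, 2` share their lowest digit, so `α` divides `1` or `2` in
`ℤ[α]` and `|M(0)| ≤ 2`. Since `|M(0)| = |lead M| · ∏ |z|`, a conjugate off the unit circle forces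
`|M(0)| = 2` and `|lead M| = 1`; a conjugate on the unit circle would then give `M(0) ∣ lead M`.
-/

open Polynomial

/-- `α ∈ 𝓕_N`: the minimal cardinality of a finite `S ⊆ ℂ` with `ℤ[α] = S[α]` equals `N`. -/
def memF (α : ℂ) (N : ℕ) : Prop :=
  (∃ S : Finset ℂ, S.card = N ∧ repSet α ↑S = Zadj α) ∧
  ∀ S : Finset ℂ, repSet α ↑S = Zadj α → N ≤ S.card

/-- `M` is the minimal polynomial of `α` over `ℚ`, normalized to be a primitive polynomial
with integer coefficients. -/
def IsPrimMinPoly (α : ℂ) (M : ℤ[X]) : Prop :=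
  M.IsPrimitive ∧ ∃ c : ℚ, c ≠ 0 ∧ M.map (Int.castRingHom ℚ) = C c * minpoly ℚ α

theorem norm_sum_mul_pow_le_div {R : Type*} [SeminormedRing R] [NormOneClass R] {c : ℕ → R}
    {w : R} {B : ℝ} {n : ℕ} (hB : 0 ≤ B) (hc : ∀ j < n, ‖c j‖ ≤ B) (hw : ‖w‖ < 1) :
    ‖∑ j ∈ Finset.range n, c j * w ^ j‖ ≤ B / (1 - ‖w‖) :=
  calc ‖∑ j ∈ Finset.range n, c j * w ^ j‖
      ≤ ∑ j ∈ Finset.range n, B * ‖w‖ ^ j := by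
        refine (norm_sum_le _ _).trans (Finset.sum_le_sum fun j hj => ?_)
        exact (norm_mul_le _ _).trans (mul_le_mul (hc j (Finset.mem_range.mp hj))
          (norm_pow_le _ _) (norm_nonneg _) hB)
    _ ≤ B * (1 / (1 - ‖w‖)) := by
        rw [← Finset.mul_sum, Finset.range_eq_Ico]
        gcongr
        simpa using geom_sum_Ico_le_of_lt_one (m := 0) (n := n) (norm_nonneg w) hw
    _ = B / (1 - ‖w‖) := mul_one_div B _

theorem norm_eval_zero_eq_norm_leadingCoeff_mul_prod_roots (p : ℂ[X]) :
    ‖p.eval 0‖ = ‖p.leadingCoeff‖ * (p.roots.map (‖·‖)).prod := by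
  rw [← coeff_zero_eq_eval_zero, (IsAlgClosed.splits p).coeff_zero_eq_leadingCoeff_mul_prod_roots,
    norm_mul, norm_mul, norm_pow, norm_neg, norm_one, one_pow, one_mul]
  exact congrArg _ (map_multiset_prod (normHom : ℂ →*₀ ℝ) p.roots)

theorem natAbs_leadingCoeff_lt_natAbs_eval_zero {P : ℤ[X]}
    (hroots : ∀ z : ℂ, aeval z P = 0 → 1 ≤ ‖z‖) {z₀ : ℂ} (hz₀ : aeval z₀ P = 0)
    (hz₀_gt : 1 < ‖z₀‖) : P.leadingCoeff.natAbs < (P.eval 0).natAbs := by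
  have hP : P ≠ 0 := by
    rintro rfl
    exact absurd (hroots 0 (map_zero _)) (by norm_num)
  obtain ⟨t, ht⟩ := Multiset.exists_cons_of_mem (mem_aroots (S := ℂ).mpr ⟨hP, hz₀⟩)
  have hprod : 1 < ((P.aroots ℂ).map (‖·‖)).prod := by
    rw [ht, Multiset.map_cons, Multiset.prod_cons]
    refine one_lt_mul_of_lt_of_le hz₀_gt (Multiset.one_le_prod fun x hx => ?_)
    obtain ⟨z, hz, rfl⟩ := Multiset.mem_map.mp hx
    exact hroots z (mem_aroots.mp (ht ▸ Multiset.mem_cons_of_mem hz)).2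
  have hlead : 0 < ‖(P.leadingCoeff : ℂ)‖ := by simpa using hP
  have key := norm_eval_zero_eq_norm_leadingCoeff_mul_prod_roots (P.map (algebraMap ℤ ℂ))
  rw [leadingCoeff_map_of_injective (RingHom.injective_int _), eval_map_algebraMap,
    aeval_def, eval₂_at_zero] at key
  have : ‖((P.leadingCoeff : ℤ) : ℂ)‖ < ‖((P.eval 0 : ℤ) : ℂ)‖ := by
    rw [← coeff_zero_eq_eval_zero]
    calc _ < _ * _ := lt_mul_of_one_lt_right hlead hprod
      _ = _ := key.symm
  zify
  simpa [Complex.norm_intCast, ← Int.cast_abs] using this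

section Digits

variable {α : ℂ}

theorem subset_repSet (F : Set ℂ) : F ⊆ repSet α F :=
  fun s hs => ⟨0, fun _ => s, fun _ _ => hs, by simp⟩

theorem exists_digit_add_mul_of_repSet_eq {F : Set ℂ} (hF : repSet α F = Zadj α) {w : ℂ}
    (hw : w ∈ Zadj α) : ∃ s ∈ F, ∃ w' ∈ Zadj α, w = s + α * w' := by
  rw [← hF] at hw
  obtain ⟨n, f, hf, rfl⟩ := hw
  refine ⟨f 0, hf 0 n.zero_le, ?_⟩
  cases n with
  | zero => exact ⟨0, ⟨0, map_zero _⟩, by simp⟩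
  | succ k =>
    refine ⟨∑ j ∈ Finset.range (k + 1), f (j + 1) * α ^ j,
      hF ▸ ⟨k, fun j => f (j + 1), fun j hj => hf (j + 1) (by omega), rfl⟩, ?_⟩
    rw [Finset.sum_range_succ', Finset.mul_sum, add_comm]
    simp [pow_succ', mul_left_comm]

/-- Pigeonhole on the lowest digits of `0, 1, …, #S`. -/
theorem exists_natCast_eq_mul_of_repSet_eq {S : Finset ℂ} (hS : repSet α S = Zadj α) :
    ∃ δ : ℕ, 0 < δ ∧ δ ≤ S.card ∧ ∃ T : ℤ[X], (δ : ℂ) = α * aeval α T := by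
  choose s hs w hw hsw using fun m : ℕ =>
    exists_digit_add_mul_of_repSet_eq hS (w := m) ⟨C (m : ℤ), by simp⟩
  obtain ⟨m, hm, m', hm', hne, hsm⟩ := Finset.exists_ne_map_eq_of_card_lt_of_maps_to
    (s := Finset.range (S.card + 1)) (by simp) fun m _ => hs m
  wlog hlt : m < m' generalizing m m'
  · exact this m' hm' m hm hne.symm hsm.symm (by omega)
  obtain ⟨P, hP⟩ := hw m
  obtain ⟨P', hP'⟩ := hw m'
  refine ⟨m' - m, by omega, by simp at hm'; omega, P' - P, ?_⟩
  rw [map_sub, hP, hP', Nat.cast_sub hlt.le, hsw m, hsw m', hsm]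
  ring

end Digits

namespace IsPrimMinPoly

variable {α : ℂ} {M : ℤ[X]}

theorem isIntegral (hM : IsPrimMinPoly α M) : IsIntegral ℚ α := by
  obtain ⟨hprim, c, hc, hmap⟩ := hM
  by_contra h
  rw [minpoly.eq_zero h, mul_zero,
    Polynomial.map_eq_zero_iff (RingHom.injective_int (Int.castRingHom ℚ))] at hmap
  exact hprim.ne_zero hmap

theorem aeval_eq_zero_iff (hM : IsPrimMinPoly α M) {z : ℂ} :
    aeval z M = 0 ↔ aeval z (minpoly ℚ α) = 0 := by
  obtain ⟨-, c, hc, hmap⟩ := hM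
  rw [← aeval_map_algebraMap ℚ, show algebraMap ℤ ℚ = Int.castRingHom ℚ from rfl, hmap,
    map_mul, aeval_C, mul_eq_zero, or_iff_right (by simpa using hc)]

theorem aeval_self (hM : IsPrimMinPoly α M) : aeval α M = 0 :=
  hM.aeval_eq_zero_iff.mpr (minpoly.aeval ℚ α)

theorem of_aeval_eq_zero (hM : IsPrimMinPoly α M) {z : ℂ} (hz : aeval z M = 0) :
    IsPrimMinPoly z M := by
  have hint := hM.isIntegral
  have hz' := hM.aeval_eq_zero_iff.mp hz
  obtain ⟨hprim, c, hc, hmap⟩ := hM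
  refine ⟨hprim, c, hc, ?_⟩
  rw [hmap, minpoly.eq_of_irreducible_of_monic (minpoly.irreducible hint) hz' (minpoly.monic hint)]

/-- Gauss's lemma turns divisibility by the minimal polynomial over `ℚ` into divisibility
by `M` over `ℤ`. -/
theorem dvd_of_aeval_eq_zero (hM : IsPrimMinPoly α M) {P : ℤ[X]} (hP : aeval α P = 0) :
    M ∣ P := by
  obtain ⟨hprim, c, hc, hmap⟩ := hM
  rw [IsPrimitive.Int.dvd_iff_map_cast_dvd_map_cast M P hprim, hmap]
  refine (isUnit_C.mpr (Ne.isUnit hc)).mul_left_dvd.mpr (minpoly.dvd ℚ α ?_)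
  rwa [show Int.castRingHom ℚ = algebraMap ℤ ℚ from rfl, aeval_map_algebraMap]

theorem aeval_eq_of_aeval_eq (hM : IsPrimMinPoly α M) {z : ℂ} (hz : aeval z M = 0)
    {P Q : ℤ[X]} (h : aeval α P = aeval α Q) : aeval z P = aeval z Q := by
  obtain ⟨R, hR⟩ := hM.dvd_of_aeval_eq_zero (P := P - Q) (by rw [map_sub, h, sub_self])
  rw [← sub_eq_zero, ← map_sub, hR, map_mul, hz, zero_mul]

theorem eval_zero_dvd_of_natCast_eq_mul (hM : IsPrimMinPoly α M) {δ : ℕ} {T : ℤ[X]}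
    (h : (δ : ℂ) = α * aeval α T) : M.eval 0 ∣ δ := by
  have hdvd := eval_dvd (x := 0) <| hM.dvd_of_aeval_eq_zero (P := X * T - C (δ : ℤ)) <| by
    simp [h]
  simpa using hdvd

theorem isIntegral_int_of_natAbs_leadingCoeff_eq_one (hM : IsPrimMinPoly α M)
    (hlead : M.leadingCoeff.natAbs = 1) : IsIntegral ℤ α := by
  refine ⟨C M.leadingCoeff * M, monic_C_mul_of_mul_leadingCoeff_eq_one ?_, ?_⟩
  · rw [← Int.natAbs_mul_self', hlead]; rfl
  · rw [← aeval_def, map_mul, hM.aeval_self, mul_zero]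

theorem natAbs_eval_zero_le_card (hM : IsPrimMinPoly α M) {S : Finset ℂ}
    (hS : repSet α S = Zadj α) : (M.eval 0).natAbs ≤ S.card := by
  obtain ⟨δ, hδ_pos, hδ_le, T, hT⟩ := exists_natCast_eq_mul_of_repSet_eq hS
  have hdvd := Int.natAbs_dvd_natAbs.mpr (hM.eval_zero_dvd_of_natCast_eq_mul hT)
  rw [Int.natAbs_natCast] at hdvd
  exact (Nat.le_of_dvd hδ_pos hdvd).trans hδ_le

/-- A conjugate `z` inside the unit disc would bound all of `ℤ ⊆ ℤ[α]`: transporting a digit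
expansion `m = Σ sⱼ αʲ` to `z` gives `|m| ≤ (Σ_{s ∈ S} |s(z)|) / (1 - |z|)`. -/
theorem one_le_norm_of_aeval_eq_zero (hM : IsPrimMinPoly α M) {S : Finset ℂ}
    (hS : repSet α S = Zadj α) {z : ℂ} (hz : aeval z M = 0) : 1 ≤ ‖z‖ := by
  choose! D hD using fun s (hs : s ∈ S) => (hS ▸ subset_repSet (α := α) S hs : s ∈ Zadj α)
  set B := ∑ s ∈ S, ‖aeval z (D s)‖
  by_contra! hz_lt
  obtain ⟨m, hm⟩ := exists_nat_gt (B / (1 - ‖z‖))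
  obtain ⟨n, f, hf, hmf⟩ : (m : ℂ) ∈ repSet α S := hS ▸ ⟨C (m : ℤ), by simp⟩
  set G := ∑ j ∈ Finset.range (n + 1), D (f j) * X ^ j
  have hGα : aeval α G = aeval α (C (m : ℤ)) := by
    rw [aeval_C, eq_intCast, Int.cast_natCast, hmf]
    simp only [G, map_sum, map_mul, map_pow, aeval_X]
    exact Finset.sum_congr rfl fun j hj =>
      by rw [hD _ (hf j (Nat.lt_succ_iff.mp (Finset.mem_range.mp hj)))]
  have hGz : aeval z G = m := by simpa using hM.aeval_eq_of_aeval_eq hz hGα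
  have hbound : ‖aeval z G‖ ≤ B / (1 - ‖z‖) := by
    simp only [G, map_sum, map_mul, map_pow, aeval_X]
    exact norm_sum_mul_pow_le_div (Finset.sum_nonneg fun _ _ => norm_nonneg _)
      (fun j hj => Finset.single_le_sum (f := fun s => ‖aeval z (D s)‖)
        (fun _ _ => norm_nonneg _) (hf j (by omega))) hz_lt
  rw [hGz, Complex.norm_natCast] at hbound
  linarith

/-- On the unit circle `z⁻¹ = z̄` is again a conjugate, so `M` divides its own reversal. -/
theorem eval_zero_dvd_leadingCoeff (hM : IsPrimMinPoly α M) {z : ℂ} (hz : aeval z M = 0)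
    (hz_norm : ‖z‖ = 1) : M.eval 0 ∣ M.leadingCoeff := by
  have hconj : aeval (starRingEnd ℂ z) M = 0 := by
    simpa [hz] using aeval_algHom_apply (starRingEnd ℂ).toIntAlgHom z M
  have hz_ne : starRingEnd ℂ z ≠ 0 := by
    simpa [← norm_eq_zero] using hz_norm.trans_ne one_ne_zero
  let := invertibleOfNonzero hz_ne
  have hrev : aeval z M.reverse = 0 := by
    have h := (eval₂_reverse_eq_zero_iff (algebraMap ℤ ℂ) _ M).mpr hconj
    rwa [invOf_eq_inv, ← Complex.inv_eq_conj hz_norm, inv_inv] at h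
  obtain ⟨Q, hQ⟩ := (hM.of_aeval_eq_zero hz).dvd_of_aeval_eq_zero hrev
  have := congrArg (fun p => p.coeff 0) hQ
  rw [coeff_zero_reverse, mul_coeff_zero, coeff_zero_eq_eval_zero] at this
  exact ⟨_, this⟩

end IsPrimMinPoly

theorem memF_two_characterization_general (α : ℂ)
    (M : ℤ[X]) (hM : IsPrimMinPoly α M) (h2 : memF α 2) :
    (∀ z : ℂ, aeval z M = 0 → ‖z‖ = 1) ∨
    (IsIntegral ℤ α ∧ (∀ z : ℂ, aeval z M = 0 → 1 < ‖z‖) ∧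
      (M.eval 0).natAbs = 2) := by
  obtain ⟨S, hcard, hS⟩ := h2.1
  have hroots (z : ℂ) (hz : aeval z M = 0) : 1 ≤ ‖z‖ := hM.one_le_norm_of_aeval_eq_zero hS hz
  have h0_le := hM.natAbs_eval_zero_le_card hS
  refine or_iff_not_imp_left.mpr fun hall => ?_
  obtain ⟨z₀, hz₀, hz₀_ne⟩ : ∃ z₀ : ℂ, aeval z₀ M = 0 ∧ ‖z₀‖ ≠ 1 := by simpa using hall
  have hlt := natAbs_leadingCoeff_lt_natAbs_eval_zero hroots hz₀
    ((hroots z₀ hz₀).lt_of_ne' hz₀_ne)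
  have hlead_pos : 0 < M.leadingCoeff.natAbs := by simpa using hM.1.ne_zero
  have hlead : M.leadingCoeff.natAbs = 1 := by omega
  have heval : (M.eval 0).natAbs = 2 := by omega
  refine ⟨hM.isIntegral_int_of_natAbs_leadingCoeff_eq_one hlead,
    fun z hz => (hroots z hz).lt_of_ne' fun hz_norm => ?_, heval⟩
  have := Int.natAbs_dvd_natAbs.mpr (hM.eval_zero_dvd_leadingCoeff hz hz_norm)
  rw [hlead, heval] at this
  norm_num at this

/-- If an algebraic number `α` belongs to `𝓕₂`, then either all its conjugates have
modulus `1`, or `α` is an expanding algebraic integer with `|M_α(0)| = 2`. -/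
theorem memF_two_characterization (α : ℂ) (hα : IsAlgebraic ℚ α)
    (M : ℤ[X]) (hM : IsPrimMinPoly α M) (h2 : memF α 2) :
    (∀ z : ℂ, aeval z M = 0 → ‖z‖ = 1) ∨
    (IsIntegral ℤ α ∧ (∀ z : ℂ, aeval z M = 0 → 1 < ‖z‖) ∧
      (M.eval 0).natAbs = 2) :=
  memF_two_characterization_general α M hM h2
end

section
/- Let α be an expanding algebraic number (an algebraic number all of whose conjugates, including α itself, have modulus greater than 1), let R be a complete residue system mod α in ℤ[α], and let J be the associated backward division map. Then there is a constant c = c(α, R) > 0 such that for each β ∈ ℤ[α] there exists n₀ ∈ ℕ with |σ(J^{(n)}(β))| ≤ c for all n ≥ n₀ and all field embeddings σ : ℚ(α) → ℂ. -/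
open Polynomial

/-- `R` is a complete residue system mod `α` in `ℤ[α]`: `R ⊆ ℤ[α]` and every `β ∈ ℤ[α]`
is congruent modulo the ideal `αℤ[α]` to exactly one element of `R`. -/
def IsCRS (α : ℂ) (R : Set ℂ) : Prop :=
  R ⊆ Zadj α ∧ ∀ β ∈ Zadj α, ∃! r, r ∈ R ∧ ∃ γ ∈ Zadj α, β - r = α * γ

/-- `J` is the backward division map associated to the CRS `R`:
for every `β ∈ ℤ[α]`, `J β ∈ ℤ[α]` and `β = r + α · J β` for some `r ∈ R`. -/
def IsJmap (α : ℂ) (R : Set ℂ) (J : ℂ → ℂ) : Prop :=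
  ∀ β ∈ Zadj α, J β ∈ Zadj α ∧ ∃ r ∈ R, β = r + α * J β

/-- `℘`: the set of periodic elements of `ℤ[α]` under `J`. -/
def perSet (α : ℂ) (J : ℂ → ℂ) : Set ℂ :=
  {β ∈ Zadj α | ∃ n : ℕ, 1 ≤ n ∧ J^[n] β = β}

/-- The orbit of `β` under `J` is eventually periodic. -/
def EvPeriodic (J : ℂ → ℂ) (β : ℂ) : Prop :=
  ∃ (k m : ℕ), 1 ≤ m ∧ J^[k + m] β = J^[k] β

/-!
Every conjugate of `α` has modulus `> 1`, and `R` is finite because some nonzero integer `a`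
lies in `αℤ[α]`, so every residue class mod `α` contains one of `0, …, |a| - 1`. Applying an
embedding `σ` to `β = r + α J(β)` gives `|σ(J β)| ≤ (|σ β| + C) / |σ α|` with `C` bounding
`|σ r|` on `R`. This affine map contracts towards `C / (|σ α| - 1)`, so the conjugates of the
orbit eventually stay below that value plus one; there are finitely many embeddings.
-/

open Filter Topology IntermediateField

theorem eventually_le_of_le_add_div {x : ℕ → ℝ} {C m : ℝ} (hm : 1 < m)
    (hx : ∀ n, x (n + 1) ≤ (x n + C) / m) : ∀ᶠ n in atTop, x n ≤ C / (m - 1) + 1 := by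
  set L := C / (m - 1)
  have hm0 : 0 < m := by linarith
  -- `L` is the fixed point of `t ↦ (t + C) / m`, so the distance to it shrinks by `m`
  have hcontract : ∀ n, x (n + 1) - L ≤ (x n - L) * m⁻¹ := fun n => by
    have hL : (L + C) / m = L := by
      rw [div_eq_iff hm0.ne']
      simp only [L]
      field_simp [sub_ne_zero.2 hm.ne']
      ring
    calc x (n + 1) - L ≤ (x n + C) / m - (L + C) / m := by rw [hL]; linarith [hx n]
      _ = (x n - L) * m⁻¹ := by ring
  have hgeom : ∀ n, x n - L ≤ (x 0 - L) * m⁻¹ ^ n := fun n => by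
    induction n with
    | zero => simp
    | succ n ih =>
      calc x (n + 1) - L ≤ (x n - L) * m⁻¹ := hcontract n
        _ ≤ (x 0 - L) * m⁻¹ ^ n * m⁻¹ := by gcongr
        _ = (x 0 - L) * m⁻¹ ^ (n + 1) := by ring
  have hlim : Tendsto (fun n => (x 0 - L) * m⁻¹ ^ n) atTop (𝓝 0) := by
    simpa using (tendsto_pow_atTop_nhds_zero_of_lt_one (inv_nonneg.2 hm0.le)
      (inv_lt_one_of_one_lt₀ hm)).const_mul (x 0 - L)
  filter_upwards [hlim.eventually (gt_mem_nhds one_pos)] with n hn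
  linarith [hgeom n]

theorem eventually_norm_le_of_eq_add_mul {𝕜 : Type*} [NormedField 𝕜] {f r : ℕ → 𝕜} {a : 𝕜}
    {C : ℝ} (ha : 1 < ‖a‖) (hr : ∀ n, ‖r n‖ ≤ C) (hf : ∀ n, f n = r n + a * f (n + 1)) :
    ∀ᶠ n in atTop, ‖f n‖ ≤ C / (‖a‖ - 1) + 1 := by
  refine eventually_le_of_le_add_div ha fun n => ?_
  have ha0 : 0 < ‖a‖ := by linarith
  rw [le_div_iff₀ ha0, mul_comm, ← norm_mul, eq_sub_of_add_eq' (hf n).symm]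
  exact (norm_sub_le _ _).trans (by linarith [hr n])

section

variable {α : ℂ} {R : Set ℂ} {J : ℂ → ℂ}

theorem mem_Zadj_iff {x : ℂ} : x ∈ Zadj α ↔ x ∈ Algebra.adjoin ℤ {α} := by
  simp [Zadj, Algebra.adjoin_singleton_eq_range_aeval]

theorem Zadj_subset_adjoin : Zadj α ⊆ ℚ⟮α⟯ := fun x hx => by
  have : Algebra.adjoin ℤ {α} ≤ ℚ⟮α⟯.toSubalgebra.restrictScalars ℤ :=
    Algebra.adjoin_le (Set.singleton_subset_iff.2 (mem_adjoin_simple_self ℚ α))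
  exact this (mem_Zadj_iff.1 hx)

theorem iterate_mem_Zadj (hJ : IsJmap α R J) {β : ℂ} (hβ : β ∈ Zadj α) (n : ℕ) :
    J^[n] β ∈ Zadj α := by
  induction n with
  | zero => exact hβ
  | succ n ih => rw [Function.iterate_succ_apply']; exact (hJ _ ih).1

/-- `x ≡ y (mod αℤ[α])`. -/
def ZadjModEq (α x y : ℂ) : Prop := ∃ γ ∈ Zadj α, x - y = α * γ

theorem ZadjModEq.symm {x y : ℂ} (h : ZadjModEq α x y) : ZadjModEq α y x := by
  obtain ⟨γ, hγ, h⟩ := h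
  exact ⟨-γ, mem_Zadj_iff.2 (neg_mem (mem_Zadj_iff.1 hγ)), by linear_combination -h⟩

theorem ZadjModEq.trans {x y z : ℂ} (hxy : ZadjModEq α x y) (hyz : ZadjModEq α y z) :
    ZadjModEq α x z := by
  obtain ⟨γ, hγ, hxy⟩ := hxy
  obtain ⟨δ, hδ, hyz⟩ := hyz
  exact ⟨γ + δ, mem_Zadj_iff.2 (add_mem (mem_Zadj_iff.1 hγ) (mem_Zadj_iff.1 hδ)),
    by linear_combination hxy + hyz⟩

theorem exists_intCast_zadjModEq {x : ℂ} (hx : x ∈ Zadj α) : ∃ n : ℤ, ZadjModEq α x n := by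
  obtain ⟨P, rfl⟩ := hx
  obtain ⟨Q, hQ⟩ := X_dvd_sub_C (p := P)
  exact ⟨P.coeff 0, aeval α Q, ⟨Q, rfl⟩, by simpa using congrArg (aeval α) hQ⟩

theorem exists_ne_zero_forall_zadjModEq_emod (hα : IsAlgebraic ℤ α) (h0 : α ≠ 0) :
    ∃ a : ℤ, a ≠ 0 ∧ ∀ n : ℤ, ZadjModEq α n (n % a : ℤ) := by
  obtain ⟨γ, hγ, a, ha, hαγ⟩ :=
    hα.exists_nonzero_eq_adjoin_mul (mem_nonZeroDivisors_of_ne_zero h0)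
  refine ⟨a, ha, fun n => ⟨(n / a : ℤ) * γ,
    mem_Zadj_iff.2 (mul_mem (intCast_mem _ _) hγ), ?_⟩⟩
  rw [eq_intCast] at hαγ
  rw [Int.emod_def]
  push_cast
  linear_combination -((n / a : ℤ) : ℂ) * hαγ

theorem IsCRS.finite (hα : IsAlgebraic ℤ α) (h0 : α ≠ 0) (hR : IsCRS α R) : R.Finite := by
  obtain ⟨a, ha, hmod⟩ := exists_ne_zero_forall_zadjModEq_emod hα h0
  have hcover : R ⊆ ⋃ k ∈ Finset.Ico 0 |a|, {r | r ∈ R ∧ ZadjModEq α k r} := fun r hr => by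
    obtain ⟨n, hn⟩ := exists_intCast_zadjModEq (hR.1 hr)
    exact Set.mem_biUnion (Finset.mem_Ico.2 ⟨Int.emod_nonneg n ha, Int.emod_lt_abs n ha⟩)
      ⟨hr, (hn.trans (hmod n)).symm⟩
  refine (Set.Finite.biUnion (Finset.finite_toSet _) fun k _ => ?_).subset hcover
  exact Set.Subsingleton.finite fun r hr r' hr' =>
    (hR.2 k ⟨C k, by simp⟩).unique hr hr'

theorem isIntegral_of_forall_root_minpoly_one_lt_norm
    (h : ∀ z : ℂ, aeval z (minpoly ℚ α) = 0 → 1 < ‖z‖) : IsIntegral ℚ α := by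
  by_contra hα
  have := h 0 (by simp [minpoly.eq_zero hα])
  norm_num at this

theorem one_lt_norm_algHom_gen (hexp : ∀ z : ℂ, aeval z (minpoly ℚ α) = 0 → 1 < ‖z‖)
    (σ : ℚ⟮α⟯ →ₐ[ℚ] ℂ) : 1 < ‖σ (AdjoinSimple.gen ℚ α)‖ :=
  hexp _ <| by
    rw [aeval_algHom_apply, ← minpoly_gen]
    exact (congrArg σ (minpoly.aeval ℚ _)).trans (map_zero σ)

theorem exists_eventually_norm_embedding_iterate_le (hRZ : R ⊆ Zadj α) (hRfin : R.Finite)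
    (hJ : IsJmap α R J) (σ : ℚ⟮α⟯ →ₐ[ℚ] ℂ) (hσ : 1 < ‖σ (AdjoinSimple.gen ℚ α)‖) :
    ∃ c, ∀ β (hβ : β ∈ Zadj α), ∀ᶠ n in atTop,
      ‖σ ⟨J^[n] β, Zadj_subset_adjoin (iterate_mem_Zadj hJ hβ n)⟩‖ ≤ c := by
  obtain ⟨C, hC⟩ := ((hRfin.preimage Subtype.val_injective.injOn).image
    fun r : ℚ⟮α⟯ => ‖σ r‖).bddAbove
  refine ⟨C / (‖σ (AdjoinSimple.gen ℚ α)‖ - 1) + 1, fun β hβ => ?_⟩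
  choose d hdR hd using fun n => (hJ _ (iterate_mem_Zadj hJ hβ n)).2
  refine eventually_norm_le_of_eq_add_mul hσ
    (r := fun n => σ ⟨d n, Zadj_subset_adjoin (hRZ (hdR n))⟩)
    (fun n => hC ⟨_, hdR n, rfl⟩) fun n => ?_
  rw [← map_mul, ← map_add]
  congr 1
  ext
  exact (hd n).trans (by rw [← Function.iterate_succ_apply' J n]; rfl)

end

theorem orbits_eventually_bounded_general (α : ℂ)
    (hexp : ∀ z : ℂ, aeval z (minpoly ℚ α) = 0 → 1 < ‖z‖)
    (R : Set ℂ) (hR : IsCRS α R) (J : ℂ → ℂ) (hJ : IsJmap α R J) :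
    ∃ c : ℝ, 0 < c ∧ ∀ β ∈ Zadj α, ∃ n₀ : ℕ, ∀ n ≥ n₀,
      ∀ σ : (IntermediateField.adjoin ℚ {α}) →ₐ[ℚ] ℂ,
        ∀ h : J^[n] β ∈ IntermediateField.adjoin ℚ {α},
          ‖σ ⟨J^[n] β, h⟩‖ ≤ c := by
  have hint := isIntegral_of_forall_root_minpoly_one_lt_norm hexp
  have : FiniteDimensional ℚ ℚ⟮α⟯ := adjoin.finiteDimensional hint
  have h0 : α ≠ 0 := norm_pos_iff.1 (one_pos.trans (hexp α (minpoly.aeval ℚ α)))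
  have hRfin := hR.finite ((IsFractionRing.isAlgebraic_iff ℤ ℚ ℂ).2 hint.isAlgebraic) h0
  choose c hc using fun σ => exists_eventually_norm_embedding_iterate_le hR.1 hRfin hJ σ
    (one_lt_norm_algHom_gen hexp σ)
  obtain ⟨c₀, hc₀⟩ := Finite.bddAbove_range c
  refine ⟨max c₀ 1, by positivity, fun β hβ => ?_⟩
  obtain ⟨n₀, hn₀⟩ := (eventually_all.2 fun σ => hc σ β hβ).exists_forall_of_atTop
  exact ⟨n₀, fun n hn σ _ => (hn₀ n hn σ).trans ((hc₀ ⟨σ, rfl⟩).trans (le_max_left _ _))⟩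

/-- Proposition 3: if `α` is an expanding algebraic number (all conjugates of modulus `> 1`),
`R` a CRS and `J` the associated map, then there is `c = c(α, R) > 0` such that for each
`β ∈ ℤ[α]` there is `n₀` with `|σ(J^{(n)}(β))| ≤ c` for all `n ≥ n₀` and all embeddings
`σ : ℚ(α) → ℂ`. -/
theorem orbits_eventually_bounded (α : ℂ) (hα : IsAlgebraic ℚ α)
    (hexp : ∀ z : ℂ, aeval z (minpoly ℚ α) = 0 → 1 < ‖z‖)
    (R : Set ℂ) (hR : IsCRS α R) (J : ℂ → ℂ) (hJ : IsJmap α R J) :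
    ∃ c : ℝ, 0 < c ∧ ∀ β ∈ Zadj α, ∃ n₀ : ℕ, ∀ n ≥ n₀,
      ∀ σ : (IntermediateField.adjoin ℚ {α}) →ₐ[ℚ] ℂ,
        ∀ h : J^[n] β ∈ IntermediateField.adjoin ℚ {α},
          ‖σ ⟨J^[n] β, h⟩‖ ≤ c :=
  orbits_eventually_bounded_general α hexp R hR J hJ
end
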